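/- arXiv:1004.0561 — 2 statements merged into one kernel-verified Lean document; each statement's English description precedes it below -/
import Mathlib

section
/- Every eigenvalue of any finite product of matrices from the family {G₁,...,G₁₂} has absolute value at most 1; in particular, the spectral radius of any such product equals 0 or 1, and the joint spectral radius of the family is at most 1. -/
def G : Fin 12 → Matrix (Fin 3) (Fin 3) ℂ :=
  ![!![0,0,-1; 0,1,0; 0,0,1],
    !![1,0,0; 1,1,1; -1,0,0],
    !![0,0,0; 0,1,0; 0,0,1],
    !![0,0,0; 0,1,0; 1,0,1],
    !![1,0,0; 0,1,1; 0,0,0],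
    !![1,0,1; 0,1,0; 0,0,0],
    !![0,-1,-1; 0,1,0; 0,0,1],
    !![1,0,0; -1,0,-1; 0,0,1],
    !![1,0,0; 0,0,0; 0,1,1],
    !![1,0,0; 0,0,0; 0,0,1],
    !![1,1,1; 0,1,0; 0,-1,0],
    !![1,0,0; 0,0,-1; 0,0,1]]

/-! Acting on row vectors, each `G i` maps the vertices of `P` together with `0`, a finite set
of integer vectors containing the standard basis, into itself. A matrix is determined by the images
of the basis rows, so the matrices preserving this set form a finite monoid, and every product `M`
of the `G i` satisfies `M ^ a = M ^ b` for some `a ≠ b`. An eigenvalue `μ` of `M` then satisfies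
`μ ^ a = μ ^ b`, which forces `‖μ‖ ∈ {0, 1}`. -/

open Matrix Polynomial

namespace Matrix

variable {n R : Type*} [Fintype n] [DecidableEq n] [Semiring R]

def vecMulStabilizer (S : Set (n → R)) : Submonoid (Matrix n n R) where
  carrier := {M | Set.MapsTo (· ᵥ* M) S S}
  one_mem' := by
    intro v hv
    simpa only [vecMul_one] using hv
  mul_mem' {M N} hM hN := by
    intro v hv
    simpa only [← vecMul_vecMul] using hN (hM hv)

theorem mem_vecMulStabilizer {S : Set (n → R)} {M : Matrix n n R} :
    M ∈ vecMulStabilizer S ↔ ∀ v ∈ S, v ᵥ* M ∈ S :=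
  Iff.rfl

theorem finite_vecMulStabilizer {S : Set (n → R)} (hS : S.Finite)
    (hbasis : ∀ i, Pi.single i 1 ∈ S) : (vecMulStabilizer S : Set (Matrix n n R)).Finite := by
  refine Set.Finite.of_injOn (f := fun M i => Pi.single i 1 ᵥ* M) (t := Set.pi .univ fun _ => S)
    (fun M hM i _ => hM (hbasis i)) (fun M _ N _ h => ?_) (Set.Finite.pi fun _ => hS)
  ext i j
  simpa only [single_one_vecMul, row_apply] using congrFun (congrFun h i) j

end Matrix

theorem Submonoid.exists_pow_eq_pow_of_finite {M : Type*} [Monoid M] {T : Submonoid M}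
    (hT : (T : Set M).Finite) {x : M} (hx : x ∈ T) : ∃ a b : ℕ, a ≠ b ∧ x ^ a = x ^ b := by
  have : Finite T := hT
  obtain ⟨a, b, hab, h⟩ :=
    Finite.exists_ne_map_eq_of_infinite fun k : ℕ => (⟨x ^ k, pow_mem hx k⟩ : T)
  exact ⟨a, b, hab, congrArg Subtype.val h⟩

theorem spectrum.pow_eq_pow_of_pow_eq_pow {𝕜 A : Type*} [Field 𝕜] [Ring A] [Algebra 𝕜 A] {x : A}
    {μ : 𝕜} (hμ : μ ∈ spectrum 𝕜 x) {a b : ℕ} (h : x ^ a = x ^ b) : μ ^ a = μ ^ b := by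
  cases subsingleton_or_nontrivial A
  · simp [spectrum.of_subsingleton] at hμ
  have hmem := spectrum.subset_polynomial_aeval x (X ^ a - X ^ b) ⟨μ, hμ, rfl⟩
  simp only [eval_sub, eval_pow, eval_X, map_sub, map_pow, aeval_X, h, sub_self,
    spectrum.zero_eq, Set.mem_singleton_iff] at hmem
  exact sub_eq_zero.mp hmem

theorem norm_eq_zero_or_one_of_pow_eq_pow {𝕜 : Type*} [NormedDivisionRing 𝕜] {x : 𝕜} {a b : ℕ}
    (hab : a ≠ b) (h : x ^ a = x ^ b) : ‖x‖ = 0 ∨ ‖x‖ = 1 := by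
  by_contra! hx
  have hpow : ‖x‖ ^ a = ‖x‖ ^ b := by rw [← norm_pow, ← norm_pow, h]
  exact hab ((pow_right_inj₀ ((norm_nonneg x).lt_of_ne' hx.1) hx.2).mp hpow)

-- `G` over `ℤ`, where membership in a finite set of vectors is decidable.
def Gℤ : Fin 12 → Matrix (Fin 3) (Fin 3) ℤ :=
  ![!![0,0,-1; 0,1,0; 0,0,1],
    !![1,0,0; 1,1,1; -1,0,0],
    !![0,0,0; 0,1,0; 0,0,1],
    !![0,0,0; 0,1,0; 1,0,1],
    !![1,0,0; 0,1,1; 0,0,0],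
    !![1,0,1; 0,1,0; 0,0,0],
    !![0,-1,-1; 0,1,0; 0,0,1],
    !![1,0,0; -1,0,-1; 0,0,1],
    !![1,0,0; 0,0,0; 0,1,1],
    !![1,0,0; 0,0,0; 0,0,1],
    !![1,1,1; 0,1,0; 0,-1,0],
    !![1,0,0; 0,0,-1; 0,0,1]]

theorem G_eq_map_Gℤ (i : Fin 12) : G i = (Int.castRingHom ℂ).mapMatrix (Gℤ i) := by
  fin_cases i <;> ext j k <;> fin_cases j <;> fin_cases k <;> simp [G, Gℤ]

-- The vertices of `P`, together with `0`.
def polytopeVertices : List (Fin 3 → ℤ) :=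
  [![1,0,1], ![-1,0,-1], ![1,0,0], ![-1,0,0], ![0,0,1], ![0,0,-1],
   ![1,1,1], ![-1,-1,-1], ![0,1,0], ![0,-1,0], ![0,1,1], ![0,-1,-1], 0]

theorem vecMul_Gℤ_mem_polytopeVertices (i : Fin 12) :
    ∀ v ∈ polytopeVertices, v ᵥ* Gℤ i ∈ polytopeVertices := by
  revert i
  decide

theorem single_one_mem_polytopeVertices (i : Fin 3) : Pi.single i 1 ∈ polytopeVertices := by
  revert i
  decide

theorem exists_pow_eq_pow_G_prod (L : List (Fin 12)) :
    ∃ a b : ℕ, a ≠ b ∧ (L.map G).prod ^ a = (L.map G).prod ^ b := by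
  have hmem : (L.map Gℤ).prod ∈ vecMulStabilizer {v | v ∈ polytopeVertices} :=
    Submonoid.list_prod_mem _ fun M hM => by
      obtain ⟨i, -, rfl⟩ := List.mem_map.mp hM
      exact mem_vecMulStabilizer.mpr (vecMul_Gℤ_mem_polytopeVertices i)
  obtain ⟨a, b, hab, h⟩ := Submonoid.exists_pow_eq_pow_of_finite
    (finite_vecMulStabilizer (List.finite_toSet _) single_one_mem_polytopeVertices) hmem
  have hprod : (L.map G).prod = (Int.castRingHom ℂ).mapMatrix (L.map Gℤ).prod := by
    rw [map_list_prod, List.map_map]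
    exact congrArg List.prod (List.map_congr_left fun i _ => G_eq_map_Gℤ i)
  exact ⟨a, b, hab, by rw [hprod, ← map_pow, ← map_pow, h]⟩

theorem eigenvalues_of_G_products_in_unit_disc (L : List (Fin 12)) :
    (∀ μ : ℂ, ((L.map G).prod.charpoly.IsRoot μ) → ‖μ‖ ≤ 1) ∧
    ((∀ μ : ℂ, ((L.map G).prod.charpoly.IsRoot μ) → μ = 0) ∨
      (∃ μ : ℂ, ((L.map G).prod.charpoly.IsRoot μ) ∧ ‖μ‖ = 1)) := by
  obtain ⟨a, b, hab, hpow⟩ := exists_pow_eq_pow_G_prod L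
  have hnorm (μ : ℂ) (hμ : (L.map G).prod.charpoly.IsRoot μ) : ‖μ‖ = 0 ∨ ‖μ‖ = 1 :=
    norm_eq_zero_or_one_of_pow_eq_pow hab
      (spectrum.pow_eq_pow_of_pow_eq_pow (mem_spectrum_iff_isRoot_charpoly.mpr hμ) hpow)
  refine ⟨fun μ hμ => (hnorm μ hμ).elim (·.le.trans zero_le_one) (·.le), ?_⟩
  by_cases hzero : ∀ μ : ℂ, (L.map G).prod.charpoly.IsRoot μ → μ = 0
  · exact .inl hzero
  · push Not at hzero
    obtain ⟨μ, hμ, hμ0⟩ := hzero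
    exact .inr ⟨μ, hμ, (hnorm μ hμ).resolve_left (norm_ne_zero_iff.mpr hμ0)⟩
end

section
/- If a finite product of matrices from the family {B₁,...,B₁₂} (strong arbitrage matrices) is conjugated by Q to block form [[I₃,0],[F,G]] where G is the corresponding product of G-matrices, then every eigenvalue of the product of B-matrices equals either 0 or 1, or has absolute value at most 1 with all eigenvalues on the unit circle equal to 1; in particular, the spectral radius of any finite product of matrices B_n is exactly 1. -/
/-!
Conjugating by `Q` puts every `B_n`, hence every product of them, in the block form
`[[1, 0], [F, G]]`, so the characteristic polynomial of a product is `(X - 1) ^ 3` times that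
of its block `G`. The blocks `G_n` map a finite set of integer row vectors containing the
standard basis into itself. If `G v = μ v` with `v ≠ 0` and `r` is a row of that set maximising
`‖r ⬝ᵥ v‖ > 0`, then `‖μ‖ ‖r ⬝ᵥ v‖ = ‖(r ᵥ* G) ⬝ᵥ v‖ ≤ ‖r ⬝ᵥ v‖`, so `‖μ‖ ≤ 1`.
-/

/-- The twelve `6×6` matrices `B_n` of the paper (acting on row vectors on the right),
in the log-coordinates `v = (log r_FA, log r_AR, log r_RM, log r_FR, log r_AM, log r_FM)`. -/
def B : Fin 12 → Matrix (Fin 6) (Fin 6) ℂ :=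
  ![!![0,0,0,0,0,0; -1,1,0,0,0,0; 0,0,1,0,0,0; 1,0,0,1,0,0; 0,0,0,0,1,0; 0,0,0,0,0,1],
    !![0,0,0,0,0,0; 0,1,0,0,0,0; 0,0,1,0,0,0; 0,0,0,1,0,0; -1,0,0,0,1,0; 1,0,0,0,0,1],
    !![1,0,0,1,0,0; 0,1,0,1,0,0; 0,0,1,0,0,0; 0,0,0,0,0,0; 0,0,0,0,1,0; 0,0,0,0,0,1],
    !![1,0,0,0,0,0; 0,1,0,0,0,0; 0,0,1,-1,0,0; 0,0,0,0,0,0; 0,0,0,0,1,0; 0,0,0,1,0,1],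
    !![1,0,0,0,0,1; 0,1,0,0,0,0; 0,0,1,0,0,0; 0,0,0,1,0,0; 0,0,0,0,1,1; 0,0,0,0,0,0],
    !![1,0,0,0,0,0; 0,1,0,0,0,0; 0,0,1,0,0,1; 0,0,0,1,0,1; 0,0,0,0,1,0; 0,0,0,0,0,0],
    !![1,-1,0,0,0,0; 0,0,0,0,0,0; 0,0,1,0,0,0; 0,1,0,1,0,0; 0,0,0,0,1,0; 0,0,0,0,0,1],
    !![1,0,0,0,0,0; 0,0,0,0,0,0; 0,-1,1,0,0,0; 0,0,0,1,0,0; 0,1,0,0,1,0; 0,0,0,0,0,1],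
    !![1,0,0,0,-1,0; 0,1,0,0,0,0; 0,0,1,0,0,0; 0,0,0,1,0,0; 0,0,0,0,0,0; 0,0,0,0,1,1],
    !![1,0,0,0,0,0; 0,1,0,0,1,0; 0,0,1,0,1,0; 0,0,0,1,0,0; 0,0,0,0,0,0; 0,0,0,0,0,1],
    !![1,0,0,0,0,0; 0,1,0,0,0,0; 0,0,0,0,0,0; 0,0,-1,1,0,0; 0,0,0,0,1,0; 0,0,1,0,0,1],
    !![1,0,0,0,0,0; 0,1,-1,0,0,0; 0,0,0,0,0,0; 0,0,0,1,0,0; 0,0,1,0,1,0; 0,0,0,0,0,1]]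

open Polynomial

namespace Matrix

variable {m n ι K R : Type*} [Fintype m] [Fintype n]

theorem exists_mulVec_eq_smul_of_isRoot_charpoly [DecidableEq n] [Field K]
    {M : Matrix n n K} {μ : K} (hμ : M.charpoly.IsRoot μ) : ∃ v ≠ 0, M *ᵥ v = μ • v := by
  rw [IsRoot, eval_charpoly, ← exists_mulVec_eq_zero_iff] at hμ
  obtain ⟨v, hv, hMv⟩ := hμ
  refine ⟨v, hv, ?_⟩
  rw [sub_mulVec, scalar_apply, sub_eq_zero] at hMv
  ext i
  simp [← hMv, mulVec_diagonal]

theorem norm_le_one_of_isRoot_charpoly_of_vecMul_mem_range [DecidableEq n] [NormedField K]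
    [Finite ι] (M : Matrix n n K) (ρ : ι → n → K) (hρM : ∀ i, ∃ j, ρ i ᵥ* M = ρ j)
    (hρ : ∀ v, (∀ i, ρ i ⬝ᵥ v = 0) → v = 0) {μ : K} (hμ : M.charpoly.IsRoot μ) : ‖μ‖ ≤ 1 := by
  obtain ⟨v, hv, hMv⟩ := exists_mulVec_eq_smul_of_isRoot_charpoly hμ
  obtain ⟨i₀, hi₀⟩ : ∃ i, ρ i ⬝ᵥ v ≠ 0 := by
    by_contra! h
    exact hv (hρ v h)
  have : Nonempty ι := ⟨i₀⟩
  obtain ⟨i, hi⟩ := Finite.exists_max fun i => ‖ρ i ⬝ᵥ v‖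
  obtain ⟨j, hj⟩ := hρM i
  have hpos : 0 < ‖ρ i ⬝ᵥ v‖ := (norm_pos_iff.2 hi₀).trans_le (hi i₀)
  refine (mul_le_iff_le_one_left hpos).1 ?_
  calc ‖μ‖ * ‖ρ i ⬝ᵥ v‖ = ‖ρ j ⬝ᵥ v‖ := by
        rw [← norm_mul, ← smul_eq_mul, ← dotProduct_smul, ← hMv, dotProduct_mulVec, hj]
    _ ≤ ‖ρ i ⬝ᵥ v‖ := hi j

theorem exists_vecMul_map_eq [Semiring R] [Semiring K] (f : R →+* K) {M : Matrix n n R}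
    {ρ : ι → n → R} (h : ∀ i, ∃ j, ρ i ᵥ* M = ρ j) (i : ι) :
    ∃ j, (f ∘ ρ i) ᵥ* M.map f = f ∘ ρ j := by
  obtain ⟨j, hj⟩ := h i
  exact ⟨j, funext fun k => by rw [← RingHom.map_vecMul, hj, Function.comp_apply]⟩

variable [DecidableEq m] [DecidableEq n]

theorem mul_list_prod_mul [Semiring R] {P : Matrix m n R} {P' : Matrix n m R}
    (h : P * P' = 1) (h' : P' * P = 1) (L : List (Matrix m m R)) :
    P' * L.prod * P = (L.map (P' * · * P)).prod := by
  induction L with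
  | nil => simpa using h'
  | cons M L ih =>
    rw [List.map_cons, List.prod_cons, List.prod_cons, ← ih]
    simp only [Matrix.mul_assoc]
    rw [← Matrix.mul_assoc P, h, Matrix.one_mul]

theorem charpoly_mul_mul [CommRing R] {P : Matrix m n R} {P' : Matrix n m R}
    (h : P * P' = 1) (hcard : Fintype.card m = Fintype.card n) (M : Matrix m m R) :
    (P' * M * P).charpoly = M.charpoly := by
  have := charpoly_mul_comm' (P' * M) P
  rwa [← Matrix.mul_assoc, h, Matrix.one_mul, hcard, (isRegular_X_pow _).left.eq_iff] at this

def blockUnitriangularStabilizer [Semiring R] (ρ : ι → n → R) :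
    Submonoid (Matrix (m ⊕ n) (m ⊕ n) R) where
  carrier := {P | P.toBlocks₁₁ = 1 ∧ P.toBlocks₁₂ = 0 ∧ ∀ i, ∃ j, ρ i ᵥ* P.toBlocks₂₂ = ρ j}
  one_mem' := ⟨toBlocks₁₁_diagonal 1, toBlocks₁₂_diagonal 1, fun i =>
    ⟨i, by rw [← diagonal_one, toBlocks₂₂_diagonal]; exact vecMul_one _⟩⟩
  mul_mem' := by
    rintro P P' ⟨h₁₁, h₁₂, hρ⟩ ⟨h₁₁', h₁₂', hρ'⟩
    rw [← fromBlocks_toBlocks P, ← fromBlocks_toBlocks P', h₁₁, h₁₂, h₁₁', h₁₂',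
      fromBlocks_multiply]
    refine ⟨by simp, by simp, fun i => ?_⟩
    obtain ⟨j, hj⟩ := hρ i
    obtain ⟨k, hk⟩ := hρ' j
    exact ⟨k, by simp [← vecMul_vecMul, hj, hk]⟩

theorem mem_blockUnitriangularStabilizer [Semiring R] {ρ : ι → n → R}
    {P : Matrix (m ⊕ n) (m ⊕ n) R} :
    P ∈ blockUnitriangularStabilizer ρ ↔
      P.toBlocks₁₁ = 1 ∧ P.toBlocks₁₂ = 0 ∧ ∀ i, ∃ j, ρ i ᵥ* P.toBlocks₂₂ = ρ j :=
  Iff.rfl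

theorem charpoly_of_mem_blockUnitriangularStabilizer [CommRing R] {ρ : ι → n → R}
    {P : Matrix (m ⊕ n) (m ⊕ n) R} (hP : P ∈ blockUnitriangularStabilizer ρ) :
    P.charpoly = (X - 1) ^ Fintype.card m * P.toBlocks₂₂.charpoly := by
  rw [← fromBlocks_toBlocks P, hP.1, hP.2.1, charpoly_fromBlocks_zero₁₂, charpoly_one]
  simp

end Matrix

open Matrix

def BInt : Fin 12 → Matrix (Fin 6) (Fin 6) ℤ :=
  ![!![0,0,0,0,0,0; -1,1,0,0,0,0; 0,0,1,0,0,0; 1,0,0,1,0,0; 0,0,0,0,1,0; 0,0,0,0,0,1],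
    !![0,0,0,0,0,0; 0,1,0,0,0,0; 0,0,1,0,0,0; 0,0,0,1,0,0; -1,0,0,0,1,0; 1,0,0,0,0,1],
    !![1,0,0,1,0,0; 0,1,0,1,0,0; 0,0,1,0,0,0; 0,0,0,0,0,0; 0,0,0,0,1,0; 0,0,0,0,0,1],
    !![1,0,0,0,0,0; 0,1,0,0,0,0; 0,0,1,-1,0,0; 0,0,0,0,0,0; 0,0,0,0,1,0; 0,0,0,1,0,1],
    !![1,0,0,0,0,1; 0,1,0,0,0,0; 0,0,1,0,0,0; 0,0,0,1,0,0; 0,0,0,0,1,1; 0,0,0,0,0,0],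
    !![1,0,0,0,0,0; 0,1,0,0,0,0; 0,0,1,0,0,1; 0,0,0,1,0,1; 0,0,0,0,1,0; 0,0,0,0,0,0],
    !![1,-1,0,0,0,0; 0,0,0,0,0,0; 0,0,1,0,0,0; 0,1,0,1,0,0; 0,0,0,0,1,0; 0,0,0,0,0,1],
    !![1,0,0,0,0,0; 0,0,0,0,0,0; 0,-1,1,0,0,0; 0,0,0,1,0,0; 0,1,0,0,1,0; 0,0,0,0,0,1],
    !![1,0,0,0,-1,0; 0,1,0,0,0,0; 0,0,1,0,0,0; 0,0,0,1,0,0; 0,0,0,0,0,0; 0,0,0,0,1,1],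
    !![1,0,0,0,0,0; 0,1,0,0,1,0; 0,0,1,0,1,0; 0,0,0,1,0,0; 0,0,0,0,0,0; 0,0,0,0,0,1],
    !![1,0,0,0,0,0; 0,1,0,0,0,0; 0,0,0,0,0,0; 0,0,-1,1,0,0; 0,0,0,0,1,0; 0,0,1,0,0,1],
    !![1,0,0,0,0,0; 0,1,-1,0,0,0; 0,0,0,0,0,0; 0,0,0,1,0,0; 0,0,1,0,1,0; 0,0,0,0,0,1]]

theorem B_eq_map_BInt (n : Fin 12) : B n = (BInt n).map (Int.castRingHom ℂ) := by
  fin_cases n <;> simp only [B, BInt, ← Matrix.ext_iff, Fin.forall_fin_succ] <;> simp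

theorem prod_map_B (L : List (Fin 12)) :
    (L.map B).prod = (L.map BInt).prod.map (Int.castRingHom ℂ) := by
  rw [← RingHom.mapMatrix_apply, map_list_prod, List.map_map]
  exact congrArg _ (List.map_congr_left fun n _ => B_eq_map_BInt n)

-- The columns of `Q` are indexed by `Fin 3 ⊕ Fin 3`, so that `QInv * M * Q` is directly a block
-- matrix.
def Q : Matrix (Fin 6) (Fin 3 ⊕ Fin 3) ℤ :=
  (!![1,0,0,1,0,0; 0,1,0,0,1,0; 0,0,1,0,0,1; 0,0,0,0,-1,1; 0,0,0,1,-1,0; 0,0,0,-1,1,-1] :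
    Matrix (Fin 6) (Fin 6) ℤ).submatrix id finSumFinEquiv

def QInv : Matrix (Fin 3 ⊕ Fin 3) (Fin 6) ℤ :=
  (!![1,0,0,1,0,1; 0,1,0,1,1,1; 0,0,1,0,1,1; 0,0,0,-1,0,-1; 0,0,0,-1,-1,-1; 0,0,0,0,-1,-1] :
    Matrix (Fin 6) (Fin 6) ℤ).submatrix finSumFinEquiv id

theorem Q_mul_QInv : Q * QInv = 1 := by decide

theorem QInv_mul_Q : QInv * Q = 1 := by decide

-- The orbit of the standard basis rows (entries 12, 9 and 7) under right multiplication by the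
-- blocks `G_n`.
def basisRowOrbit : Fin 13 → Fin 3 → ℤ :=
  ![![-1,0,0], ![-1,1,-1], ![-1,1,0], ![0,-1,0], ![0,-1,1], ![0,0,-1], ![0,0,0],
    ![0,0,1], ![0,1,-1], ![0,1,0], ![1,-1,0], ![1,-1,1], ![1,0,0]]

theorem basisRowOrbit_separating (v : Fin 3 → ℂ)
    (hv : ∀ i, (Int.castRingHom ℂ ∘ basisRowOrbit i) ⬝ᵥ v = 0) : v = 0 := by
  ext k
  fin_cases k
  · simpa [basisRowOrbit, dotProduct, Fin.sum_univ_three] using hv 12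
  · simpa [basisRowOrbit, dotProduct, Fin.sum_univ_three] using hv 9
  · simpa [basisRowOrbit, dotProduct, Fin.sum_univ_three] using hv 7

theorem QInv_mul_BInt_mul_Q_mem (n : Fin 12) :
    QInv * BInt n * Q ∈ blockUnitriangularStabilizer basisRowOrbit := by
  rw [mem_blockUnitriangularStabilizer]
  fin_cases n <;> decide

theorem QInv_mul_prod_mul_Q_mem (L : List (Fin 12)) :
    QInv * (L.map BInt).prod * Q ∈ blockUnitriangularStabilizer basisRowOrbit := by
  rw [mul_list_prod_mul Q_mul_QInv QInv_mul_Q, List.map_map]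
  refine Submonoid.list_prod_mem _ fun P hP => ?_
  obtain ⟨n, -, rfl⟩ := List.mem_map.1 hP
  exact QInv_mul_BInt_mul_Q_mem n

theorem charpoly_prod_B (L : List (Fin 12)) :
    (L.map B).prod.charpoly = (X - 1) ^ 3 *
      ((QInv * (L.map BInt).prod * Q).toBlocks₂₂.map (Int.castRingHom ℂ)).charpoly := by
  rw [prod_map_B, charpoly_map, ← charpoly_mul_mul Q_mul_QInv rfl,
    charpoly_of_mem_blockUnitriangularStabilizer (QInv_mul_prod_mul_Q_mem L),
    Polynomial.map_mul, charpoly_map]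
  simp

/-- Every finite product of the strong-arbitrage matrices `B_n` has spectral radius
exactly `1`: all its eigenvalues lie in the closed unit disc and `1` is an eigenvalue. -/
theorem spectral_radius_of_B_products_is_one (L : List (Fin 12)) :
    (∀ μ : ℂ, ((L.map B).prod.charpoly.IsRoot μ) → ‖μ‖ ≤ 1) ∧
    ((L.map B).prod.charpoly.IsRoot 1) := by
  have hG := (QInv_mul_prod_mul_Q_mem L).2.2
  rw [charpoly_prod_B]
  refine ⟨fun μ hμ => ?_, by simp⟩
  rw [IsRoot, eval_mul, mul_eq_zero] at hμ
  rcases hμ with h | h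
  · rw [show μ = 1 by simpa [sub_eq_zero] using h, norm_one]
  · exact norm_le_one_of_isRoot_charpoly_of_vecMul_mem_range _ _
      (exists_vecMul_map_eq _ hG) basisRowOrbit_separating h
end
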